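/- Let p be an odd prime and n a nonnegative integer with 0 ≤ n ≤ p−1. Then P_{p−1−n}(t) ≡ P_n(t) (mod p) as polynomials, i.e., all coefficients of P_{p−1−n}(t) − P_n(t) are rationals with numerator divisible by p (denominators prime to p). -/

import Mathlib

/-- Generalized binomial coefficient C(a,k) = a(a-1)...(a-k+1)/k!. -/
def gchoose (a : ℚ) (k : ℕ) : ℚ :=
  (∏ i ∈ Finset.range k, (a - i)) / (Nat.factorial k : ℚ)

/-- `x` is a `p`-adic integer: its reduced denominator is not divisible by `p`. -/
def IsPInt (p : ℕ) (x : ℚ) : Prop := ¬ p ∣ x.den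

/-- `x ≡ y (mod p^e)` for rationals: `(x - y)/p^e` is a `p`-adic integer. -/
def ModCong (p e : ℕ) (x y : ℚ) : Prop :=
  ∃ z : ℚ, ¬ p ∣ z.den ∧ x - y = (p : ℚ) ^ e * z

/-- The Legendre polynomial `P_n(x) = ∑_{k=0}^n C(n,k) C(n+k,k) ((x-1)/2)^k`. -/
noncomputable def legendre (n : ℕ) : Polynomial ℚ :=
  ∑ k ∈ Finset.range (n + 1),
    Polynomial.C ((n.choose k : ℚ) * ((n + k).choose k)) *
      (Polynomial.C (1/2 : ℚ) * (Polynomial.X - 1)) ^ k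

/-!
With `a_n(k) = C(n,k) C(n+k,k)` we have `P_n = ∑ₖ a_n(k) ((x-1)/2)^k` and
`(k!)² a_n(k) = ∏_{i<k} (n(n+1) - i(i+1))`. For `k < p` the factorial is a unit mod `p`, so
`a_n(k) mod p` depends only on `n(n+1) mod p`, which is the same for `n` and `p-1-n`. As `p` is
odd, `1/2` is `p`-integral, so each coefficient of `P_{p-1-n} - P_n` is `p` times a `p`-integral
rational.
-/

open Polynomial Finset Nat

lemma isPInt_iff_mem_integer {p : ℕ} [Fact p.Prime] {x : ℚ} :
    IsPInt p x ↔ x ∈ (Rat.padicValuation p).integer :=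
  Rat.padicValuation_le_one_iff.symm

lemma modCong_one_of_sub_eq_mul {p : ℕ} [Fact p.Prime] {x y z : ℚ}
    (hz : z ∈ (Rat.padicValuation p).integer) (h : x - y = p * z) : ModCong p 1 x y :=
  ⟨z, isPInt_iff_mem_integer.2 hz, by rw [pow_one, h]⟩

lemma factorial_sq_mul_choose_mul_choose_add {R : Type*} [CommRing R] (a k : ℕ) :
    (k ! : R) ^ 2 * (a.choose k * (a + k).choose k) =
      ∏ i ∈ range k, ((a : R) * (a + 1) - i * (i + 1)) := by
  have hdesc : (k ! * a.choose k : R) = ∏ i ∈ range k, ((a : R) - i) := by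
    rw [← descPochhammer_eval_eq_prod_range, ← Nat.cast_mul,
      ← descFactorial_eq_factorial_mul_choose, descPochhammer_eval_eq_descFactorial]
  have hasc : (k ! * (a + k).choose k : R) = ∏ i ∈ range k, ((a : R) + 1 + i) := by
    rw [← Nat.cast_mul, ← ascFactorial_eq_factorial_mul_choose, ascFactorial_eq_prod_range]
    push_cast
    rfl
  calc (k ! : R) ^ 2 * (a.choose k * (a + k).choose k)
      = (k ! * a.choose k : R) * (k ! * (a + k).choose k) := by ring
    _ = ∏ i ∈ range k, ((a : R) * (a + 1) - i * (i + 1)) := by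
      rw [hdesc, hasc, ← prod_mul_distrib]
      exact prod_congr rfl fun i _ => by ring

lemma choose_mul_choose_add_modEq {p m n k : ℕ} [hp : Fact p.Prime] (hmn : m + n + 1 = p)
    (hk : k < p) : m.choose k * (m + k).choose k ≡ n.choose k * (n + k).choose k [MOD p] := by
  rw [← ZMod.natCast_eq_natCast_iff]
  have hfact : (k ! : ZMod p) ≠ 0 := by
    rw [Ne, ZMod.natCast_eq_zero_iff, hp.out.dvd_factorial]
    omega
  have hm : (m : ZMod p) * (m + 1) = n * (n + 1) := by
    have : ((m + n + 1 : ℕ) : ZMod p) = 0 := by rw [hmn, ZMod.natCast_self]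
    push_cast at this
    linear_combination (m - n : ZMod p) * this
  apply mul_left_cancel₀ (pow_ne_zero 2 hfact)
  push_cast
  rw [factorial_sq_mul_choose_mul_choose_add, factorial_sq_mul_choose_mul_choose_add, hm]

lemma legendre_eq_sum_range {n N : ℕ} (h : n < N) :
    legendre n = ∑ k ∈ range N,
      C ((n.choose k : ℚ) * ((n + k).choose k)) * (C (1/2 : ℚ) * (X - 1)) ^ k := by
  refine sum_subset (range_subset_range.2 h) fun k _ hk => ?_
  rw [choose_eq_zero_of_lt (by simpa using hk)]
  simp

lemma half_mul_X_sub_one_mem_liftsRing {p : ℕ} [hp : Fact p.Prime] (hp2 : p ≠ 2) :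
    C (1/2 : ℚ) * (X - 1) ∈ liftsRing (Rat.padicValuation p).integer.subtype := by
  have hhalf : (1/2 : ℚ) ∈ (Rat.padicValuation p).integer := by
    rw [← isPInt_iff_mem_integer, IsPInt, show (1/2 : ℚ).den = 2 by norm_num]
    exact fun h => hp2 ((Nat.prime_dvd_prime_iff_eq hp.out Nat.prime_two).1 h)
  exact mul_mem (C_mem_lifts (Rat.padicValuation p).integer.subtype ⟨_, hhalf⟩)
    (sub_mem (X_mem_lifts _) (one_mem _))

theorem legendre_cong (p : ℕ) (hp : p.Prime) (hodd : Odd p)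
    (n : ℕ) (hn : n ≤ p - 1) (i : ℕ) :
    ModCong p 1 ((legendre (p - 1 - n)).coeff i) ((legendre n).coeff i) := by
  have := Fact.mk hp
  set S := (Rat.padicValuation p).integer
  set T : ℚ[X] := C (1/2 : ℚ) * (X - 1)
  set m := p - 1 - n
  have hmn : m + n + 1 = p := by have := hp.one_le; omega
  choose! z hz using fun k (hk : k ∈ range p) =>
    Nat.modEq_iff_dvd.1 (choose_mul_choose_add_modEq hmn (mem_range.1 hk)).symm
  have hT : ∀ k, (T ^ k).coeff i ∈ S := fun k => by
    obtain ⟨c, hc⟩ := (lifts_iff_coeff_lifts _).1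
      (pow_mem (half_mul_X_sub_one_mem_liftsRing (hodd.ne_two_of_dvd_nat dvd_rfl)) k) i
    exact hc ▸ c.2
  refine modCong_one_of_sub_eq_mul (z := ∑ k ∈ range p, z k * (T ^ k).coeff i)
    (sum_mem fun k _ => mul_mem (intCast_mem _ _) (hT k)) ?_
  rw [legendre_eq_sum_range (show m < p by omega), legendre_eq_sum_range (show n < p by omega),
    finsetSum_coeff, finsetSum_coeff, ← sum_sub_distrib, mul_sum]
  refine sum_congr rfl fun k hk => ?_
  have hzk : ((m.choose k * (m + k).choose k : ℤ) : ℚ) - (n.choose k * (n + k).choose k : ℤ)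
      = p * z k := by exact_mod_cast hz k hk
  push_cast at hzk
  rw [coeff_C_mul, coeff_C_mul, ← sub_mul, hzk, mul_assoc]
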